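/- Let k ≥ 1, p ∈ (1, 2) and M > 0. There exists a constant c = c(k,p,M) > 0 such that for all z, η ∈ ℝ^k with |η| ≤ M one has |V_p(z − η)| ≤ c |V_p(z) − V_p(η)|. -/

import Mathlib

/-! With `q = (p - 2)/4 ≤ 0`, the radial profile `r ↦ (1 + r²)^q r` of `V_p` has derivative at
least `(p/2)(1 + r²)^q`. Combined with the Cauchy–Schwarz-type bound `⟪z, η⟫ ≤ ‖z‖‖η‖`, this gives
the strong monotonicity estimate `(p/2)(1 + R²)^q ‖z - η‖ ≤ ‖V_p z - V_p η‖` for `‖z‖, ‖η‖ ≤ R`.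
Taking `R = ‖z - η‖ + M` and using `1 + (d + M)² ≤ 2(1 + M²)(1 + d²)` yields the theorem, since
`‖V_p (z - η)‖ = (1 + d²)^q d` with `d = ‖z - η‖`. -/

open Real RealInnerProductSpace

noncomputable def Vp (p : ℝ) {E : Type*} [NormedAddCommGroup E] [NormedSpace ℝ E] (z : E) : E :=
  ((1 + ‖z‖ ^ 2) ^ ((p - 2) / 4)) • z

lemma norm_Vp (p : ℝ) {E : Type*} [NormedAddCommGroup E] [NormedSpace ℝ E] (z : E) :
    ‖Vp p z‖ = (1 + ‖z‖ ^ 2) ^ ((p - 2) / 4) * ‖z‖ := by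
  rw [Vp, norm_smul, Real.norm_of_nonneg (by positivity)]

lemma hasDerivAt_one_add_sq_rpow_mul_self (q r : ℝ) :
    HasDerivAt (fun r : ℝ => (1 + r ^ 2) ^ q * r)
      ((1 + r ^ 2) ^ (q - 1) * (1 + (1 + 2 * q) * r ^ 2)) r := by
  have hpos : 0 < 1 + r ^ 2 := by positivity
  have hsq : HasDerivAt (fun r : ℝ => 1 + r ^ 2) (2 * r) r := by
    simpa using (hasDerivAt_pow 2 r).const_add 1
  refine ((hsq.rpow_const (p := q) (Or.inl hpos.ne')).mul (hasDerivAt_id r)).congr_deriv ?_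
  rw [id_eq, rpow_sub_one hpos.ne']
  field_simp
  ring

lemma mul_le_deriv_one_add_sq_rpow_mul_self {p : ℝ} (hp : p ≤ 2) (r : ℝ) :
    p / 2 * (1 + r ^ 2) ^ ((p - 2) / 4)
      ≤ (1 + r ^ 2) ^ ((p - 2) / 4 - 1) * (1 + (1 + 2 * ((p - 2) / 4)) * r ^ 2) := by
  have hpos : 0 < 1 + r ^ 2 := by positivity
  calc p / 2 * (1 + r ^ 2) ^ ((p - 2) / 4)
      = (1 + r ^ 2) ^ ((p - 2) / 4 - 1) * (p / 2 * (1 + r ^ 2)) := by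
        rw [rpow_sub_one hpos.ne']
        field_simp
    _ ≤ (1 + r ^ 2) ^ ((p - 2) / 4 - 1) * (1 + (1 + 2 * ((p - 2) / 4)) * r ^ 2) := by
        gcongr
        nlinarith

lemma mul_sub_le_one_add_sq_rpow_mul_sub {p : ℝ} (hp0 : 0 ≤ p) (hp : p ≤ 2) {α β : ℝ}
    (hβ : 0 ≤ β) (hβα : β ≤ α) :
    p / 2 * (1 + α ^ 2) ^ ((p - 2) / 4) * (α - β)
      ≤ (1 + α ^ 2) ^ ((p - 2) / 4) * α - (1 + β ^ 2) ^ ((p - 2) / 4) * β := by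
  have hderiv := hasDerivAt_one_add_sq_rpow_mul_self ((p - 2) / 4)
  refine (convex_Icc β α).mul_sub_le_image_sub_of_le_deriv
    (fun r _ => (hderiv r).continuousAt.continuousWithinAt)
    (fun r _ => (hderiv r).differentiableAt.differentiableWithinAt) (fun r hr => ?_)
    β ⟨le_rfl, hβα⟩ α ⟨hβα, le_rfl⟩ hβα
  rw [interior_Icc] at hr
  rw [(hderiv r).deriv]
  refine le_trans ?_ (mul_le_deriv_one_add_sq_rpow_mul_self hp r)
  gcongr p / 2 * ?_
  exact rpow_le_rpow_of_nonpos (by positivity) (by nlinarith [hr.1, hr.2]) (by linarith)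

section InnerProductSpace

variable {F : Type*} [NormedAddCommGroup F] [InnerProductSpace ℝ F]

lemma inner_Vp_sub_Vp (p : ℝ) (z η : F) :
    ⟪Vp p z - Vp p η, z - η⟫
      = (1 + ‖z‖ ^ 2) ^ ((p - 2) / 4) * ‖z‖ ^ 2 + (1 + ‖η‖ ^ 2) ^ ((p - 2) / 4) * ‖η‖ ^ 2
        - ((1 + ‖z‖ ^ 2) ^ ((p - 2) / 4) + (1 + ‖η‖ ^ 2) ^ ((p - 2) / 4)) * ⟪z, η⟫ := by
  simp only [Vp, inner_sub_left, inner_sub_right, real_inner_smul_left,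
    real_inner_self_eq_norm_sq, real_inner_comm η z]
  ring

lemma mul_norm_sub_sq_le_inner_Vp_sub_Vp {p : ℝ} (hp0 : 0 ≤ p) (hp : p ≤ 2) {z η : F}
    (h : ‖η‖ ≤ ‖z‖) :
    p / 2 * (1 + ‖z‖ ^ 2) ^ ((p - 2) / 4) * ‖z - η‖ ^ 2 ≤ ⟪Vp p z - Vp p η, z - η⟫ := by
  set a := (1 + ‖z‖ ^ 2) ^ ((p - 2) / 4)
  set b := (1 + ‖η‖ ^ 2) ^ ((p - 2) / 4)
  have ha : 0 < a := by positivity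
  have hab : a ≤ b :=
    rpow_le_rpow_of_nonpos (by positivity) (by gcongr) (by linarith)
  have hradial := mul_sub_le_one_add_sq_rpow_mul_sub hp0 hp (norm_nonneg η) h
  have hinner : ⟪z, η⟫ ≤ ‖z‖ * ‖η‖ := real_inner_le_norm z η
  rw [inner_Vp_sub_Vp, norm_sub_sq_real]
  -- the gap is `(‖z‖‖η‖ - ⟪z, η⟫)(a + b - p a) + (‖z‖ - ‖η‖)((a‖z‖ - b‖η‖) - (p/2) a (‖z‖ - ‖η‖))`
  nlinarith [mul_nonneg (sub_nonneg.2 hinner) (by nlinarith : 0 ≤ a + b - p * a),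
    mul_nonneg (sub_nonneg.2 h) (sub_nonneg.2 hradial)]

lemma mul_norm_sub_le_norm_Vp_sub_Vp_of_norm_le {p : ℝ} (hp0 : 0 ≤ p) (hp : p ≤ 2) {z η : F}
    (h : ‖η‖ ≤ ‖z‖) :
    p / 2 * (1 + ‖z‖ ^ 2) ^ ((p - 2) / 4) * ‖z - η‖ ≤ ‖Vp p z - Vp p η‖ := by
  rcases (norm_nonneg (z - η)).eq_or_lt with hd | hd
  · rw [← hd, mul_zero]
    exact norm_nonneg _
  refine le_of_mul_le_mul_right ?_ hd
  calc p / 2 * (1 + ‖z‖ ^ 2) ^ ((p - 2) / 4) * ‖z - η‖ * ‖z - η‖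
      = p / 2 * (1 + ‖z‖ ^ 2) ^ ((p - 2) / 4) * ‖z - η‖ ^ 2 := by ring
    _ ≤ ⟪Vp p z - Vp p η, z - η⟫ := mul_norm_sub_sq_le_inner_Vp_sub_Vp hp0 hp h
    _ ≤ ‖Vp p z - Vp p η‖ * ‖z - η‖ := real_inner_le_norm _ _

lemma mul_norm_sub_le_norm_Vp_sub_Vp {p : ℝ} (hp0 : 0 ≤ p) (hp : p ≤ 2) {z η : F} {R : ℝ}
    (hz : ‖z‖ ≤ R) (hη : ‖η‖ ≤ R) :
    p / 2 * (1 + R ^ 2) ^ ((p - 2) / 4) * ‖z - η‖ ≤ ‖Vp p z - Vp p η‖ := by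
  have hmono : ∀ w : F, ‖w‖ ≤ R → (1 + R ^ 2) ^ ((p - 2) / 4) ≤ (1 + ‖w‖ ^ 2) ^ ((p - 2) / 4) :=
    fun w hw => rpow_le_rpow_of_nonpos (by positivity) (by gcongr) (by linarith)
  rcases le_total ‖η‖ ‖z‖ with h | h
  · refine le_trans ?_ (mul_norm_sub_le_norm_Vp_sub_Vp_of_norm_le hp0 hp h)
    gcongr p / 2 * ?_ * _
    exact hmono z hz
  · rw [norm_sub_rev z η, norm_sub_rev (Vp p z)]
    refine le_trans ?_ (mul_norm_sub_le_norm_Vp_sub_Vp_of_norm_le hp0 hp h)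
    gcongr p / 2 * ?_ * _
    exact hmono η hη

lemma norm_Vp_sub_le {p : ℝ} (hp0 : 0 < p) (hp : p ≤ 2) {M : ℝ} {z η : F} (hη : ‖η‖ ≤ M) :
    ‖Vp p (z - η)‖ ≤ 2 / p * (2 * (1 + M ^ 2)) ^ ((2 - p) / 4) * ‖Vp p z - Vp p η‖ := by
  set d := ‖z - η‖
  set K := 2 * (1 + M ^ 2)
  have hK : 0 < K := by positivity
  have hzR : ‖z‖ ≤ d + M := by linarith [norm_le_norm_sub_add z η]
  have hηR : ‖η‖ ≤ d + M := by linarith [norm_nonneg (z - η)]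
  have hR : 1 + (d + M) ^ 2 ≤ K * (1 + d ^ 2) := by nlinarith [sq_nonneg (d - M), sq_nonneg (d * M)]
  have hKK : K ^ ((2 - p) / 4) * K ^ ((p - 2) / 4) = 1 := by
    rw [← rpow_add hK, ← rpow_zero K]; ring_nf
  calc ‖Vp p (z - η)‖ = (1 + d ^ 2) ^ ((p - 2) / 4) * d := norm_Vp p _
    _ = 2 / p * K ^ ((2 - p) / 4) * (p / 2 * (K * (1 + d ^ 2)) ^ ((p - 2) / 4) * d) := by
        rw [mul_rpow hK.le (by positivity)]
        field_simp
        linear_combination -d * hKK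
    _ ≤ 2 / p * K ^ ((2 - p) / 4) * (p / 2 * (1 + (d + M) ^ 2) ^ ((p - 2) / 4) * d) := by
        gcongr 2 / p * K ^ ((2 - p) / 4) * (p / 2 * ?_ * d)
        exact rpow_le_rpow_of_nonpos (by positivity) hR (by linarith)
    _ ≤ 2 / p * K ^ ((2 - p) / 4) * ‖Vp p z - Vp p η‖ := by
        gcongr
        exact mul_norm_sub_le_norm_Vp_sub_Vp hp0.le hp hzR hηR

end InnerProductSpace

theorem stmt_7_general (k : ℕ) (p : ℝ) (hp1 : 1 < p) (hp2 : p < 2) (M : ℝ) :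
    ∃ c : ℝ, 0 < c ∧ ∀ z η : EuclideanSpace ℝ (Fin k), ‖η‖ ≤ M →
      ‖Vp p (z - η)‖ ≤ c * ‖Vp p z - Vp p η‖ :=
  ⟨2 / p * (2 * (1 + M ^ 2)) ^ ((2 - p) / 4), by positivity,
    fun _ _ hη => norm_Vp_sub_le (by linarith) hp2.le hη⟩

theorem stmt_7 (k : ℕ) (hk : 1 ≤ k) (p : ℝ) (hp1 : 1 < p) (hp2 : p < 2) (M : ℝ) (hM : 0 < M) :
    ∃ c : ℝ, 0 < c ∧ ∀ z η : EuclideanSpace ℝ (Fin k), ‖η‖ ≤ M →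
      ‖Vp p (z - η)‖ ≤ c * ‖Vp p z - Vp p η‖ :=
  stmt_7_general k p hp1 hp2 M
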